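/- Let G, G' be groups with identities e, e', ψ ∈ Aut(G), ψ' ∈ Aut(G'), and let P, P' be the orbits of e, e' under the respective inner automorphism groups of Q(G,ψ) and Q(G',ψ'). If f : Q(G,ψ) → Q(G',ψ') is a quandle isomorphism with f(e) = e', then the restriction f|_P : P → P' is a group isomorphism. -/

import Mathlib

/-- The generalized Alexander quandle operation on a group `G` with automorphism `ψ`. -/
def gaOp {G : Type*} [Group G] (ψ : G ≃* G) (x y : G) : G := y * ψ (y⁻¹ * x)

/-- The point symmetry `s_y : x ↦ x * y = y·ψ(y⁻¹x)` as a permutation of `G`. -/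
def ptSym {G : Type*} [Group G] (ψ : G ≃* G) (y : G) : Equiv.Perm G :=
  (Equiv.mulLeft y⁻¹).trans (ψ.toEquiv.trans (Equiv.mulLeft y))

/-- The inner automorphism group of `Q(G,ψ)`: the group of permutations of `G`
generated by the point symmetries. -/
def innGroup {G : Type*} [Group G] (ψ : G ≃* G) : Subgroup (Equiv.Perm G) :=
  Subgroup.closure (Set.range (ptSym ψ))

/-- `P(Q(G,ψ))`: the orbit of the identity element under `Inn(Q(G,ψ))`. -/
def innOrbit {G : Type*} [Group G] (ψ : G ≃* G) : Set G :=
  {g | ∃ f ∈ innGroup ψ, f 1 = g}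

lemma ptSym_apply {G : Type*} [Group G] (ψ : G ≃* G) (y x : G) :
    ptSym ψ y x = y * ψ (y⁻¹ * x) := rfl

/-- An equivariant bijection sends the orbit of 1 into the orbit of 1. -/
lemma orbit_maps {G G' : Type*} [Group G] [Group G'] (ψ : G ≃* G) (ψ' : G' ≃* G')
    (e : G ≃ G') (hhom : ∀ x y : G, e (gaOp ψ x y) = gaOp ψ' (e x) (e y))
    (he : e 1 = 1) : ∀ p ∈ innOrbit ψ, e p ∈ innOrbit ψ' := by
  intro p hp
  obtain ⟨T, hT, hT1⟩ := hp
  have key : ∀ T ∈ innGroup ψ, e.permCongr T ∈ innGroup ψ' := by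
    intro T hT
    induction hT using Subgroup.closure_induction with
    | mem x hx =>
      obtain ⟨y, rfl⟩ := hx
      have : e.permCongr (ptSym ψ y) = ptSym ψ' (e y) := by
        ext z
        have := hhom (e.symm z) y
        simp only [Equiv.permCongr_apply]
        rw [ptSym_apply, ptSym_apply]
        calc e (y * ψ (y⁻¹ * e.symm z)) = e (gaOp ψ (e.symm z) y) := rfl
          _ = gaOp ψ' (e (e.symm z)) (e y) := hhom _ _
          _ = e y * ψ' ((e y)⁻¹ * z) := by rw [e.apply_symm_apply]; rfl
      rw [this]
      exact Subgroup.subset_closure ⟨e y, rfl⟩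
    | one =>
      have : e.permCongr (1 : Equiv.Perm G) = 1 := by ext z; simp
      rw [this]; exact one_mem _
    | mul x y _ _ hx hy =>
      have : e.permCongr (x * y) = e.permCongr x * e.permCongr y := by
        ext z; simp [Equiv.Perm.mul_apply]
      rw [this]; exact mul_mem hx hy
    | inv x _ hx =>
      have : e.permCongr x⁻¹ = (e.permCongr x)⁻¹ := by
        apply eq_inv_of_mul_eq_one_left
        ext z
        simp [Equiv.Perm.mul_apply]
      rw [this]; exact inv_mem hx
  refine ⟨e.permCongr T, key T hT, ?_⟩
  have h1 : e.symm 1 = 1 := by rw [← he, e.symm_apply_apply]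
  rw [Equiv.permCongr_apply, h1, hT1]

theorem quandle_iso_restricts_to_group_iso {G G' : Type*} [Group G] [Group G']
    (ψ : G ≃* G) (ψ' : G' ≃* G') (f : G → G')
    (hbij : Function.Bijective f)
    (hhom : ∀ x y : G, f (gaOp ψ x y) = gaOp ψ' (f x) (f y))
    (he : f 1 = 1) :
    Set.BijOn f (innOrbit ψ) (innOrbit ψ') ∧
      ∀ p ∈ innOrbit ψ, ∀ q ∈ innOrbit ψ, f (p * q) = f p * f q := by
  set e : G ≃ G' := Equiv.ofBijective f hbij with hedef
  have hef : ∀ x, e x = f x := fun x => rfl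
  have he1 : e 1 = 1 := he
  have hsymm1 : e.symm 1 = 1 := by rw [← he1, e.symm_apply_apply]
  have hhom' : ∀ x y : G', e.symm (gaOp ψ' x y) = gaOp ψ (e.symm x) (e.symm y) := by
    intro x y
    apply e.injective
    rw [e.apply_symm_apply]
    have h1 : f (e.symm x) = x := e.apply_symm_apply x
    have h2 : f (e.symm y) = y := e.apply_symm_apply y
    have h3 := hhom (e.symm x) (e.symm y)
    rw [h1, h2] at h3
    exact h3.symm
  -- the commutation f ∘ ψ = ψ' ∘ f
  have fψ : ∀ x, f (ψ x) = ψ' (f x) := by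
    intro x
    have := hhom x 1
    simpa [gaOp, he] using this
  have fψi : ∀ x, f (ψ.symm x) = ψ'.symm (f x) := by
    intro x
    have := fψ (ψ.symm x)
    rw [ψ.apply_symm_apply] at this
    rw [this, ψ'.symm_apply_apply]
  -- the key multiplicativity lemma
  have hmul : ∀ p ∈ innOrbit ψ, ∀ z : G, f (p * z) = f p * f z := by
    intro p hp
    obtain ⟨T, hT, hT1⟩ := hp
    set K : G → Prop := fun g => ∀ z : G, f (g * z) = f g * f z with hK
    have K1 : K 1 := by intro z; simp [he]
    have Kmul : ∀ g h, K g → K h → K (g * h) := by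
      intro g h hg hh z
      have h1 : f (g * h) = f g * f h := by
        have := hg h; simpa using this
      calc f (g * h * z) = f (g * (h * z)) := by rw [mul_assoc]
        _ = f g * f (h * z) := hg _
        _ = f g * (f h * f z) := by rw [hh]
        _ = f (g * h) * f z := by rw [h1, mul_assoc]
    have Kψ : ∀ g, K g ↔ K (ψ g) := by
      intro g
      constructor
      · intro hg z
        calc f (ψ g * z) = f (ψ (g * ψ.symm z)) := by rw [map_mul, ψ.apply_symm_apply]
          _ = ψ' (f (g * ψ.symm z)) := fψ _
          _ = ψ' (f g * f (ψ.symm z)) := by rw [hg]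
          _ = ψ' (f g) * ψ' (f (ψ.symm z)) := map_mul _ _ _
          _ = f (ψ g) * f z := by rw [← fψ, ← fψ, ψ.apply_symm_apply]
      · intro hg z
        calc f (g * z) = f (ψ.symm (ψ g * ψ z)) := by
              rw [← map_mul, ψ.symm_apply_apply]
          _ = ψ'.symm (f (ψ g * ψ z)) := fψi _
          _ = ψ'.symm (f (ψ g) * f (ψ z)) := by rw [hg]
          _ = ψ'.symm (f (ψ g)) * ψ'.symm (f (ψ z)) := map_mul _ _ _
          _ = f g * f z := by
              rw [← fψi, ← fψi, ψ.symm_apply_apply, ψ.symm_apply_apply]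
    have Kinv : ∀ g, K g → K g⁻¹ := by
      intro g hg z
      have h2 : ∀ w, f (g⁻¹ * w) = (f g)⁻¹ * f w := by
        intro w
        have := hg (g⁻¹ * w)
        rw [mul_inv_cancel_left] at this
        rw [this, inv_mul_cancel_left]
      have h3 : f g⁻¹ = (f g)⁻¹ := by
        have := h2 1
        simpa [he] using this
      rw [h2, h3]
    have haK : ∀ y z : G, f (y * ψ y⁻¹ * z) = f y * ψ' (f y)⁻¹ * f z := by
      intro y z
      have key := hhom (ψ.symm z) y
      simp only [gaOp] at key
      have l : y * ψ (y⁻¹ * ψ.symm z) = y * ψ y⁻¹ * z := by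
        rw [map_mul, ψ.apply_symm_apply, mul_assoc]
      have r : f y * ψ' ((f y)⁻¹ * f (ψ.symm z)) = f y * ψ' (f y)⁻¹ * f z := by
        rw [fψi, map_mul, ψ'.apply_symm_apply, mul_assoc]
      rw [l, r] at key
      exact key
    have haK1 : ∀ y : G, f (y * ψ y⁻¹) = f y * ψ' (f y)⁻¹ := by
      intro y
      have := haK y 1
      simpa [he] using this
    have Ka : ∀ y : G, K (y * ψ y⁻¹) := by
      intro y z
      rw [haK, haK1]
    -- closure induction showing T preserves K-membership-status
    have main : ∀ T ∈ innGroup ψ, ∀ g, K g ↔ K (T g) := by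
      intro T hT
      induction hT using Subgroup.closure_induction with
      | mem x hx =>
        obtain ⟨y, rfl⟩ := hx
        intro g
        have hx : ptSym ψ y g = (y * ψ y⁻¹) * ψ g := by
          rw [ptSym_apply, map_mul, mul_assoc]
        rw [hx]
        constructor
        · intro hg
          exact Kmul _ _ (Ka y) ((Kψ g).mp hg)
        · intro hg
          have h4 : K ((y * ψ y⁻¹)⁻¹ * ((y * ψ y⁻¹) * ψ g)) :=
            Kmul _ _ (Kinv _ (Ka y)) hg
          rw [inv_mul_cancel_left] at h4
          exact (Kψ g).mpr h4
      | one => intro g; simp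
      | mul x y _ _ hx hy =>
        intro g
        rw [Equiv.Perm.mul_apply]
        exact (hy g).trans (hx (y g))
      | inv x _ hx =>
        intro g
        have := hx (x⁻¹ g)
        rw [← Equiv.Perm.mul_apply, mul_inv_cancel, Equiv.Perm.one_apply] at this
        exact this.symm
    have : K p := by
      rw [← hT1]
      exact (main T hT 1).mp K1
    exact this
  constructor
  · refine ⟨?_, ?_, ?_⟩
    · intro p hp
      have := orbit_maps ψ ψ' e hhom he1 p hp
      rwa [hef] at this
    · exact Set.injOn_of_injective hbij.injective
    · intro q hq
      have hq' : e.symm q ∈ innOrbit ψ :=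
        orbit_maps ψ' ψ e.symm hhom' hsymm1 q hq
      refine ⟨e.symm q, hq', ?_⟩
      rw [← hef, e.apply_symm_apply]
  · intro p hp q _
    exact hmul p hp q
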